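/- arXiv:2104.07544 — 5 statements merged into one kernel-verified Lean document; each statement's English description precedes it below -/
import Mathlib

section
/- (Wold decomposition for vector spaces) Let K be a field, V a vector space over K, and T : V → V an injective linear map. Then there exist submodules V_b and V_s of V which are complementary (V = V_b ⊕ V_s as an internal direct sum), such that V_b is T-invariant (T(V_b) ⊆ V_b), the restriction of T to V_b is a bijection of V_b onto V_b, and (⋂_{n=0}^∞ range(T^n)) ∩ V_s = {0} (so that the restriction of T to V_s is a shift). -/
/-- Wold decomposition for vector spaces: an injective linear map `T` on a
vector space `V` decomposes `V = V_b ⊕ V_s` with `V_b` `T`-invariant, `T` bijective on `V_b`,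
and `(⋂ n, range (T^n)) ∩ V_s = {0}` (so `T` restricted to `V_s` is a shift). -/
theorem stmt_1 {K V : Type*} [Field K] [AddCommGroup V] [Module K V]
    (T : V →ₗ[K] V) (hT : Function.Injective T) :
    ∃ Vb Vs : Submodule K V, IsCompl Vb Vs ∧
      Submodule.map T Vb ≤ Vb ∧
      Set.BijOn T (Vb : Set V) (Vb : Set V) ∧
      (⨅ n : ℕ, LinearMap.range (T ^ n)) ⊓ Vs = ⊥ := by
  set Vb : Submodule K V := ⨅ n : ℕ, LinearMap.range (T ^ n) with hVb
  obtain ⟨Vs, hVs⟩ := Submodule.exists_isCompl Vb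
  have hmem : ∀ x, x ∈ Vb ↔ ∀ n : ℕ, x ∈ LinearMap.range (T ^ n) := by
    intro x; simp [hVb, Submodule.mem_iInf]
  have hmaps : ∀ x ∈ Vb, T x ∈ Vb := by
    intro x hx
    rw [hmem] at hx ⊢
    intro n
    obtain ⟨y, hy⟩ := hx n
    refine ⟨T y, ?_⟩
    have : (T ^ n) (T y) = T ((T ^ n) y) := by
      rw [← Module.End.mul_apply, ← Module.End.mul_apply, ← pow_succ, ← pow_succ']
    rw [this, hy]
  refine ⟨Vb, Vs, hVs, ?_, ⟨fun x hx => hmaps x hx, hT.injOn, ?_⟩, by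
    exact hVs.inf_eq_bot⟩
  · rintro y ⟨x, hx, rfl⟩; exact hmaps x hx
  · intro x hx
    rw [SetLike.mem_coe, hmem] at hx
    obtain ⟨z, hz⟩ := hx 1
    simp only [pow_one] at hz
    refine ⟨z, ?_, hz⟩
    rw [SetLike.mem_coe]
    rw [hmem]
    intro n
    obtain ⟨w, hw⟩ := hx (n + 1)
    refine ⟨w, hT ?_⟩
    rw [hz, ← hw, pow_succ']
    rfl
end

section
/- Let K be a field, V a vector space over K, and T : V → V a linear map. Then the block linear map A : V × V → V × V defined by A(x, y) = (T x + (T − id) y, (T + id) x + T y) is bijective, with inverse the block linear map (x, y) ↦ (T x − (T − id) y, −(T + id) x + T y); in particular A is a Halmos dilation of T. -/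
/-- for any linear map `T : V → V`, the block map
`A(x, y) = (T x + (T - id) y, (T + id) x + T y)` is bijective, with inverse
`(x, y) ↦ (T x - (T - id) y, -(T + id) x + T y)`; in particular `A` is a Halmos
dilation of `T` (its (1,1) block is `T`). -/
theorem stmt_7 {K V : Type*} [Field K] [AddCommGroup V] [Module K V]
    (T : V →ₗ[K] V)
    (A : V × V →ₗ[K] V × V)
    (hA : ∀ x y : V,
      A (x, y) = (T x + (T - (LinearMap.id : V →ₗ[K] V)) y,
                  (T + (LinearMap.id : V →ₗ[K] V)) x + T y))
    (A' : V × V →ₗ[K] V × V)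
    (hA' : ∀ x y : V,
      A' (x, y) = (T x - (T - (LinearMap.id : V →ₗ[K] V)) y,
                   -((T + (LinearMap.id : V →ₗ[K] V)) x) + T y)) :
    Function.Bijective A ∧ Function.LeftInverse A' A ∧ Function.RightInverse A' A := by
  have hL : Function.LeftInverse A' A := by
    rintro ⟨x, y⟩
    rw [hA, hA']
    simp only [LinearMap.sub_apply, LinearMap.add_apply, LinearMap.id_apply, map_add, map_sub,
      map_neg, Prod.mk.injEq]
    constructor <;> abel
  have hR : Function.RightInverse A' A := by
    rintro ⟨x, y⟩
    rw [hA', hA]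
    simp only [LinearMap.sub_apply, LinearMap.add_apply, LinearMap.id_apply, map_add, map_sub,
      map_neg, Prod.mk.injEq]
    constructor <;> abel
  exact ⟨⟨hL.injective, hR.surjective⟩, hL, hR⟩
end

section
/- (Schäffer-type dilation for vector spaces, dilation equation) Let K be a field, V a vector space over K, and T : V → V a linear map. Let W be the vector space of finitely supported functions x : ℤ → V, let U : W → W be the linear map with (U x)(0) = T(x(0)) + x(1) and (U x)(n) = x(n+1) for n ≠ 0, and let ι : V → W send x to the function supported at 0 with value x. Then for every natural number n and every x ∈ V, the value of U^n(ι x) at 0 equals T^n x; that is, I T^n = P U^n I where P replaces a function by its value at 0 placed at position 0 and zero elsewhere. -/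
/-- Schäffer-type dilation, dilation equation: with `U` as in the
Schäffer-type dilation on `W = ℤ →₀ V` and `ι x = single 0 x`, for every `n : ℕ` and
`x : V` the value of `U^n (ι x)` at `0` equals `T^n x`. -/
theorem stmt_12 {K V : Type*} [Field K] [AddCommGroup V] [Module K V]
    (T : V →ₗ[K] V)
    (U : (ℤ →₀ V) →ₗ[K] (ℤ →₀ V))
    (hU0 : ∀ x : ℤ →₀ V, U x 0 = T (x 0) + x 1)
    (hUs : ∀ (x : ℤ →₀ V) (n : ℤ), n ≠ 0 → U x n = x (n + 1)) :
    ∀ (n : ℕ) (x : V), (U ^ n) (Finsupp.single (0 : ℤ) x) 0 = (T ^ n) x := by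
  intro n x
  have key : ∀ (n : ℕ) (m : ℤ), 0 ≤ m →
      (U ^ n) (Finsupp.single (0 : ℤ) x) m = if m = 0 then (T ^ n) x else 0 := by
    intro n
    induction n with
    | zero =>
      intro m _
      simp [Finsupp.single_apply]
      split <;> simp_all [eq_comm]
    | succ k ih =>
      intro m hm
      have hstep : (U ^ (k + 1)) (Finsupp.single (0 : ℤ) x)
          = U ((U ^ k) (Finsupp.single (0 : ℤ) x)) := by
        rw [pow_succ', Module.End.mul_apply]
      rw [hstep]
      by_cases hm0 : m = 0
      · subst hm0
        rw [hU0, ih 0 le_rfl, ih 1 (by norm_num)]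
        simp [pow_succ', Module.End.mul_apply]
      · rw [hUs _ m hm0, ih (m + 1) (by omega), if_neg (by omega), if_neg hm0]
  have := key n 0 le_rfl
  simpa using this
end

section
/- (Intertwining lifting theorem for vector spaces, forward direction) Let K be a field and V₁, V₂ vector spaces over K, with linear maps T₁ : V₁ → V₁ and T₂ : V₂ → V₂. Let (W₁, I₁, U₁, P₁) and (W₂, I₂, U₂, P₂) be the standard dilations of T₁ and T₂, respectively. If S : V₂ → V₁ is a linear map with T₁ ∘ S = S ∘ T₂, then there exists a linear map R : W₂ → W₁ such that U₁ ∘ R = R ∘ U₂, R ∘ P₂ = P₁ ∘ R, and R ∘ I₂ = I₁ ∘ S. -/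
/-- intertwining lifting, forward direction: given standard dilations
`(W₁, I₁, U₁, P₁)` and `(W₂, I₂, U₂, P₂)` of `T₁` and `T₂`, any linear `S : V₂ → V₁` with
`T₁ ∘ S = S ∘ T₂` lifts to a linear `R : W₂ → W₁` with `U₁ ∘ R = R ∘ U₂`,
`R ∘ P₂ = P₁ ∘ R` and `R ∘ I₂ = I₁ ∘ S`. -/
theorem stmt_16 {K V₁ V₂ : Type*} [Field K]
    [AddCommGroup V₁] [Module K V₁] [AddCommGroup V₂] [Module K V₂]
    (T₁ : V₁ →ₗ[K] V₁) (T₂ : V₂ →ₗ[K] V₂)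
    (I₁ : V₁ →ₗ[K] (ℕ →₀ V₁)) (hI₁ : ∀ x : V₁, I₁ x = Finsupp.single 0 x)
    (U₁ : (ℕ →₀ V₁) →ₗ[K] (ℕ →₀ V₁))
    (hU₁0 : ∀ x : ℕ →₀ V₁, U₁ x 0 = 0)
    (hU₁s : ∀ (x : ℕ →₀ V₁) (n : ℕ), U₁ x (n + 1) = x n)
    (P₁ : (ℕ →₀ V₁) →ₗ[K] (ℕ →₀ V₁))
    (hP₁ : ∀ x : ℕ →₀ V₁, P₁ x = I₁ (x.sum fun n v => (T₁ ^ n) v))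
    (I₂ : V₂ →ₗ[K] (ℕ →₀ V₂)) (hI₂ : ∀ x : V₂, I₂ x = Finsupp.single 0 x)
    (U₂ : (ℕ →₀ V₂) →ₗ[K] (ℕ →₀ V₂))
    (hU₂0 : ∀ x : ℕ →₀ V₂, U₂ x 0 = 0)
    (hU₂s : ∀ (x : ℕ →₀ V₂) (n : ℕ), U₂ x (n + 1) = x n)
    (P₂ : (ℕ →₀ V₂) →ₗ[K] (ℕ →₀ V₂))
    (hP₂ : ∀ x : ℕ →₀ V₂, P₂ x = I₂ (x.sum fun n v => (T₂ ^ n) v))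
    (S : V₂ →ₗ[K] V₁) (hS : T₁ ∘ₗ S = S ∘ₗ T₂) :
    ∃ R : (ℕ →₀ V₂) →ₗ[K] (ℕ →₀ V₁),
      U₁ ∘ₗ R = R ∘ₗ U₂ ∧ R ∘ₗ P₂ = P₁ ∘ₗ R ∧ R ∘ₗ I₂ = I₁ ∘ₗ S := by
  have hcomm : ∀ (n : ℕ) (v : V₂), S ((T₂ ^ n) v) = (T₁ ^ n) (S v) := by
    intro n
    induction n with
    | zero => intro v; simp
    | succ k ih =>
      intro v
      have h1 : T₁ (S ((T₂ ^ k) v)) = S (T₂ ((T₂ ^ k) v)) := LinearMap.congr_fun hS _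
      calc S ((T₂ ^ (k+1)) v) = S (T₂ ((T₂ ^ k) v)) := by rw [pow_succ']; rfl
      _ = T₁ (S ((T₂ ^ k) v)) := h1.symm
      _ = T₁ ((T₁ ^ k) (S v)) := by rw [ih]
      _ = (T₁ ^ (k+1)) (S v) := by rw [pow_succ']; rfl
  refine ⟨Finsupp.mapRange.linearMap S, ?_, ?_, ?_⟩
  · refine LinearMap.ext fun x => Finsupp.ext fun n => ?_
    cases n with
    | zero => simp [hU₁0, hU₂0]
    | succ k => simp [hU₁s, hU₂s]
  · refine LinearMap.ext fun x => ?_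
    simp only [LinearMap.comp_apply, hP₂, hP₁, hI₂, hI₁,
      Finsupp.mapRange.linearMap_apply, Finsupp.mapRange_single]
    congr 1
    rw [Finsupp.sum_mapRange_index (by simp)]
    rw [Finsupp.sum, map_sum, Finsupp.sum]
    congr 1
    exact funext fun n => hcomm n _
  · ext v
    simp [hI₁, hI₂]
end

section
/- (Ando-type dilation for vector spaces, joint dilation equation) Let K be a field, 𝒱 a vector space over K, and T, S : 𝒱 → 𝒱 commuting linear maps (T ∘ S = S ∘ T). Let W be the vector space of finitely supported functions x : ℕ × ℕ → 𝒱. Define I : 𝒱 → W by (I x)(0,0) = x and (I x)(n,m) = 0 otherwise; define U : W → W by (U x)(n,m) = x(n−1, m) for n ≥ 1 and (U x)(0,m) = 0; define V : W → W by (V x)(n,m) = x(n, m−1) for m ≥ 1 and (V x)(n,0) = 0; and define P : W → W by P x = I(Σ_{n,m} T^n(S^m(x(n,m)))). Then for all n, m ∈ ℕ and all x ∈ 𝒱, P(U^n(V^m(I x))) = I(T^n(S^m x)); in particular P(U^n(I x)) = I(T^n x) and P(V^m(I x)) = I(S^m x), so (W, I, U, P) and (W, I, V, P) are dilations of T and S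 respectively. -/
/-- Ando-type dilation, joint dilation equation: for commuting linear maps
`T, S` on `𝒱`, on `W = (ℕ × ℕ) →₀ 𝒱` with `I x = single (0,0) x`, the shifts
`(U x)(n+1, m) = x (n, m)`, `(U x)(0, m) = 0`, `(Vop x)(n, m+1) = x (n, m)`,
`(Vop x)(n, 0) = 0`, and `P x = I (Σ_{(n,m)} T^n (S^m (x (n,m))))`, one has
`P (U^n (Vop^m (I x))) = I (T^n (S^m x))` for all `n, m, x`; in particular
`P (U^n (I x)) = I (T^n x)` and `P (Vop^m (I x)) = I (S^m x)`. -/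
theorem stmt_18 {K 𝒱 : Type*} [Field K] [AddCommGroup 𝒱] [Module K 𝒱]
    (T S : 𝒱 →ₗ[K] 𝒱) (hTS : T ∘ₗ S = S ∘ₗ T)
    (I : 𝒱 →ₗ[K] ((ℕ × ℕ) →₀ 𝒱))
    (hI : ∀ x : 𝒱, I x = Finsupp.single (0, 0) x)
    (U : ((ℕ × ℕ) →₀ 𝒱) →ₗ[K] ((ℕ × ℕ) →₀ 𝒱))
    (hUs : ∀ (x : (ℕ × ℕ) →₀ 𝒱) (n m : ℕ), U x (n + 1, m) = x (n, m))
    (hU0 : ∀ (x : (ℕ × ℕ) →₀ 𝒱) (m : ℕ), U x (0, m) = 0)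
    (Vop : ((ℕ × ℕ) →₀ 𝒱) →ₗ[K] ((ℕ × ℕ) →₀ 𝒱))
    (hVs : ∀ (x : (ℕ × ℕ) →₀ 𝒱) (n m : ℕ), Vop x (n, m + 1) = x (n, m))
    (hV0 : ∀ (x : (ℕ × ℕ) →₀ 𝒱) (n : ℕ), Vop x (n, 0) = 0)
    (P : ((ℕ × ℕ) →₀ 𝒱) →ₗ[K] ((ℕ × ℕ) →₀ 𝒱))
    (hP : ∀ x : (ℕ × ℕ) →₀ 𝒱,
      P x = I (x.sum fun p v => (T ^ p.1) ((S ^ p.2) v))) :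
    (∀ (n m : ℕ) (x : 𝒱), P ((U ^ n) ((Vop ^ m) (I x))) = I ((T ^ n) ((S ^ m) x))) ∧
    (∀ (n : ℕ) (x : 𝒱), P ((U ^ n) (I x)) = I ((T ^ n) x)) ∧
    (∀ (m : ℕ) (x : 𝒱), P ((Vop ^ m) (I x)) = I ((S ^ m) x)) := by
  have hUsingle : ∀ (n m : ℕ) (x : 𝒱),
      U (Finsupp.single (n, m) x) = Finsupp.single (n + 1, m) x := by
    intro n m x
    ext ⟨k, l⟩
    cases k with
    | zero =>
      rw [hU0]
      simp [Finsupp.single_apply]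
    | succ k =>
      rw [hUs]
      simp [Finsupp.single_apply, Prod.ext_iff]
  have hVsingle : ∀ (n m : ℕ) (x : 𝒱),
      Vop (Finsupp.single (n, m) x) = Finsupp.single (n, m + 1) x := by
    intro n m x
    ext ⟨k, l⟩
    cases l with
    | zero =>
      rw [hV0]
      simp [Finsupp.single_apply]
    | succ l =>
      rw [hVs]
      simp [Finsupp.single_apply, Prod.ext_iff]
  have hUpow : ∀ (n a b : ℕ) (x : 𝒱),
      (U ^ n) (Finsupp.single (a, b) x) = Finsupp.single (a + n, b) x := by
    intro n
    induction n with
    | zero => simp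
    | succ n ih =>
      intro a b x
      rw [pow_succ, Module.End.mul_apply, hUsingle, ih]
      congr 2
      omega
  have hVpow : ∀ (m a b : ℕ) (x : 𝒱),
      (Vop ^ m) (Finsupp.single (a, b) x) = Finsupp.single (a, b + m) x := by
    intro m
    induction m with
    | zero => simp
    | succ m ih =>
      intro a b x
      rw [pow_succ, Module.End.mul_apply, hVsingle, ih]
      congr 2
      omega
  have key : ∀ (n m : ℕ) (x : 𝒱),
      P ((U ^ n) ((Vop ^ m) (I x))) = I ((T ^ n) ((S ^ m) x)) := by
    intro n m x
    rw [hI, hVpow, hUpow, hP, Finsupp.sum_single_index (by simp)]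
    simp
  refine ⟨key, fun n x => ?_, fun m x => ?_⟩
  · simpa using key n 0 x
  · simpa using key 0 m x
end
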